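/- arXiv:2302.13970 — 8 statements merged into one kernel-verified Lean document; each statement's English description precedes it below -/
import Mathlib

section
/- Let A and Y be nonempty compact subsets of ℝ^n with A ⊆ Y and ∂Y ⊆ A + B(0, ε) for some ε ≥ 0 (i.e., every boundary point of Y is within distance ε of A). Then the Hausdorff distance between the convex hull of Y and the convex hull of A is at most ε. -/
open Metric Pointwise

/-!
Walking from a point `y` of a bounded set `Y` along a line, in either direction, one must
leave `Y`, and by connectedness one crosses `∂Y` on the way; so `y` lies on a segment between
two boundary points, and `hull(Y) = hull(∂Y) ⊆ hull(A) + B(0, ε)`, the right-hand side being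
convex. Conversely `hull(A) ⊆ hull(Y)`.
-/

theorem IsPreconnected.inter_frontier_nonempty {X : Type*} [TopologicalSpace X] {s t : Set X}
    (hs : IsPreconnected s) (hst : (s ∩ t).Nonempty) (hsdt : (s \ t).Nonempty) :
    (s ∩ frontier t).Nonempty := by
  by_contra h
  have hcover : s ⊆ interior t ∪ (closure t)ᶜ := by
    intro x hx
    by_contra hx'
    simp only [Set.mem_union, Set.mem_compl_iff, not_or, not_not] at hx'
    exact h ⟨x, hx, hx'.2, hx'.1⟩
  rcases hs.subset_or_subset isOpen_interior isClosed_closure.isOpen_compl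
    (disjoint_compl_right.mono_left interior_subset_closure) hcover with hsub | hsub
  · obtain ⟨x, hxs, hxt⟩ := hsdt
    exact hxt (interior_subset (hsub hxs))
  · obtain ⟨x, hxs, hxt⟩ := hst
    exact hsub hxs (subset_closure hxt)

theorem hausdorffDist_le_of_subset_of_subset_add_closedBall {E : Type*}
    [SeminormedAddCommGroup E] {s t : Set E} {ε : ℝ} (hε : 0 ≤ ε) (hst : s ⊆ t)
    (hts : t ⊆ s + closedBall 0 ε) : hausdorffDist t s ≤ ε := by
  refine hausdorffDist_le_of_mem_dist hε (fun x hx => ?_) fun x hx =>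
    ⟨x, hst hx, by simpa using hε⟩
  obtain ⟨a, ha, b, hb, rfl⟩ := hts hx
  exact ⟨a, ha, by simpa [dist_eq_norm] using hb⟩

namespace Bornology.IsBounded

variable {E : Type*} [NormedAddCommGroup E] [NormedSpace ℝ E]

theorem exists_nonneg_add_smul_mem_frontier {Y : Set E} (hY : IsBounded Y) {y v : E}
    (hy : y ∈ Y) (hv : v ≠ 0) : ∃ t : ℝ, 0 ≤ t ∧ y + t • v ∈ frontier Y := by
  set ray := (fun t : ℝ => y + t • v) '' Set.Ici 0
  have hray : IsPreconnected ray :=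
    isPreconnected_Ici.image _ (by fun_prop : Continuous fun t : ℝ => y + t • v).continuousOn
  have hleave : (ray \ Y).Nonempty := by
    obtain ⟨C, hC⟩ := hY.exists_norm_le
    have hv' : 0 < ‖v‖ := norm_pos_iff.2 hv
    set t := (|C| + ‖y‖ + 1) / ‖v‖
    have ht : 0 ≤ t := by positivity
    have htv : ‖t • v‖ = |C| + ‖y‖ + 1 := by
      rw [norm_smul, Real.norm_of_nonneg ht, div_mul_cancel₀ _ hv'.ne']
    refine ⟨y + t • v, ⟨t, ht, rfl⟩, fun hmem => ?_⟩
    have hfar : ‖t • v‖ ≤ ‖y + t • v‖ + ‖y‖ := by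
      simpa using norm_sub_le (y + t • v) y
    linarith [hC _ hmem, le_abs_self C]
  obtain ⟨_, ⟨t, ht, rfl⟩, hfr⟩ :=
    hray.inter_frontier_nonempty ⟨y, ⟨0, Set.self_mem_Ici, by simp⟩, hy⟩ hleave
  exact ⟨t, ht, hfr⟩

variable [Nontrivial E]

theorem subset_convexHull_frontier {Y : Set E} (hY : IsBounded Y) :
    Y ⊆ convexHull ℝ (frontier Y) := by
  intro y hy
  obtain ⟨v, hv⟩ := exists_ne (0 : E)
  obtain ⟨a, ha, hya⟩ := hY.exists_nonneg_add_smul_mem_frontier hy hv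
  obtain ⟨b, hb, hyb⟩ := hY.exists_nonneg_add_smul_mem_frontier hy (neg_ne_zero.2 hv)
  have hseg : y ∈ segment ℝ (y + b • -v) (y + a • v) := by
    rw [mem_segment_iff_sameRay]
    simpa using (SameRay.sameRay_nonneg_smul_left v hb).nonneg_smul_right ha
  exact (convex_convexHull ℝ _).segment_subset (subset_convexHull ℝ _ hyb)
    (subset_convexHull ℝ _ hya) hseg

theorem convexHull_subset_convexHull_add_closedBall {A Y : Set E} {ε : ℝ} (hY : IsBounded Y)
    (hfr : frontier Y ⊆ A + closedBall 0 ε) :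
    convexHull ℝ Y ⊆ convexHull ℝ A + closedBall 0 ε := by
  have hconv : Convex ℝ (convexHull ℝ A + closedBall (0 : E) ε) :=
    (convex_convexHull ℝ A).add (convex_closedBall 0 ε)
  refine convexHull_min (hY.subset_convexHull_frontier.trans (convexHull_min ?_ hconv)) hconv
  exact hfr.trans (Set.add_subset_add_right (subset_convexHull ℝ A))

end Bornology.IsBounded

theorem stmt1_general (n : ℕ) (ε : ℝ) (hε : 0 ≤ ε) (A Y : Set (EuclideanSpace ℝ (Fin n)))
    (hAne : A.Nonempty) (hYc : IsCompact Y)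
    (hAY : A ⊆ Y) (hcov : frontier Y ⊆ A + closedBall (0 : EuclideanSpace ℝ (Fin n)) ε) :
    hausdorffDist (convexHull ℝ Y) (convexHull ℝ A) ≤ ε := by
  rcases subsingleton_or_nontrivial (EuclideanSpace ℝ (Fin n)) with hE | hE
  · obtain ⟨a, ha⟩ := hAne
    have hYA : Y = A := Set.Subset.antisymm (fun y _ => Subsingleton.elim a y ▸ ha) hAY
    rw [hYA, hausdorffDist_self_zero]
    exact hε
  · exact hausdorffDist_le_of_subset_of_subset_add_closedBall hε (convexHull_mono hAY)
      (hYc.isBounded.convexHull_subset_convexHull_add_closedBall hcov)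

/-- If `A ⊆ Y` are nonempty compact subsets of `ℝ^n` with `∂Y ⊆ A + B(0, ε)` for some
`ε ≥ 0`, then the Hausdorff distance between the convex hulls of `Y` and `A` is at most `ε`. -/
theorem stmt1 (n : ℕ) (ε : ℝ) (hε : 0 ≤ ε) (A Y : Set (EuclideanSpace ℝ (Fin n)))
    (hAne : A.Nonempty) (hYne : Y.Nonempty) (hAc : IsCompact A) (hYc : IsCompact Y)
    (hAY : A ⊆ Y) (hcov : frontier Y ⊆ A + closedBall (0 : EuclideanSpace ℝ (Fin n)) ε) :
    hausdorffDist (convexHull ℝ Y) (convexHull ℝ A) ≤ ε :=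
  stmt1_general n ε hε A Y hAne hYc hAY hcov
end

section
/- If Y ⊆ ℝ^n is a nonempty compact set such that a closed ball of radius R > 0 rolls freely inside Y (i.e., for every y ∈ ∂Y there exists a with y ∈ B(a, R) ⊆ Y), then a closed ball of radius R rolls freely inside the convex hull of Y: for every y ∈ ∂hull(Y) there exists b with y ∈ B(b, R) ⊆ hull(Y). -/
/-!
Let `A` be the set of centres `a` with `B(a, R) ⊆ Y`. Rolling says `∂Y ⊆ A + B(0, R) ⊆ Y`, and
since taking convex hulls commutes with Minkowski sums, `hull (A + B(0, R)) = hull A + B(0, R)`. By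
Krein–Milman the compact convex set `hull Y` is the closed convex hull of its extreme points, which
lie in `∂Y`; so `hull Y = hull ∂Y ⊆ hull A + B(0, R)`. Hence every `y ∈ hull Y` (in particular
every boundary point) is `b + v` with `b ∈ hull A`, `‖v‖ ≤ R`, and then
`B(b, R) ⊆ hull A + B(0, R) ⊆ hull Y`.
-/

open Metric Module Set
open scoped Pointwise

section

variable {E : Type*} [NormedAddCommGroup E] [NormedSpace ℝ E]

theorem isCompact_convexHull [FiniteDimensional ℝ E] {s : Set E} (hs : IsCompact s) :
    IsCompact (convexHull ℝ s) := by
  let combos (k : ℕ) : Set E :=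
    (fun p : (Fin k → ℝ) × (Fin k → E) => ∑ i, p.1 i • p.2 i) ''
      (stdSimplex ℝ (Fin k) ×ˢ univ.pi fun _ => s)
  -- Carathéodory: a point of the hull is a convex combination of at most `finrank ℝ E + 1` points.
  suffices convexHull ℝ s = ⋃ k : Fin (finrank ℝ E + 2), combos k from
    this ▸ isCompact_iUnion fun k =>
      ((isCompact_stdSimplex ℝ _).prod (isCompact_univ_pi fun _ => hs)).image (by fun_prop)
  refine subset_antisymm (fun x hx => ?_) (iUnion_subset fun k => ?_)
  · obtain ⟨ι, _, z, w, hzs, hz, hw0, hw1, rfl⟩ := eq_pos_convex_span_of_mem_convexHull hx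
    have hcard : Fintype.card ι < finrank ℝ E + 2 :=
      Nat.lt_succ_of_le <| hz.card_le_finrank_succ.trans
        (Nat.add_le_add_right (Submodule.finrank_le _) 1)
    let e := (Fintype.equivFin ι).symm
    refine mem_iUnion.2 ⟨⟨_, hcard⟩, (w ∘ e, z ∘ e), ⟨⟨fun j => (hw0 _).le, ?_⟩,
      fun j _ => hzs (mem_range_self _)⟩, ?_⟩
    · simpa only [Function.comp_apply, e.sum_comp] using hw1
    · simpa only [Function.comp_apply] using e.sum_comp fun i => w i • z i
  · rintro _ ⟨⟨w, z⟩, ⟨hw, hz⟩, rfl⟩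
    exact (convex_convexHull ℝ s).sum_mem (fun i _ => hw.1 i) hw.2
      fun i _ => subset_convexHull ℝ s (hz i (mem_univ i))

theorem extremePoints_convexHull_subset_frontier [Nontrivial E] {s : Set E} (hs : IsClosed s) :
    (convexHull ℝ s).extremePoints ℝ ⊆ frontier s := by
  intro x hx
  rw [hs.frontier_eq]
  exact ⟨extremePoints_convexHull_subset hx, fun hint =>
    (disjoint_interior_extremePoints _).notMem_of_mem_left
      (interior_mono (subset_convexHull ℝ s) hint) hx⟩

theorem IsCompact.convexHull_frontier [FiniteDimensional ℝ E] [Nontrivial E] {s : Set E}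
    (hs : IsCompact s) : convexHull ℝ (frontier s) = convexHull ℝ s := by
  have hfr : IsCompact (frontier s) :=
    hs.of_isClosed_subset isClosed_frontier hs.isClosed.frontier_subset
  refine subset_antisymm (convexHull_mono hs.isClosed.frontier_subset) ?_
  calc convexHull ℝ s
      = closure (convexHull ℝ ((convexHull ℝ s).extremePoints ℝ)) :=
        (closure_convexHull_extremePoints (isCompact_convexHull hs)
          (convex_convexHull ℝ s)).symm
    _ ⊆ closure (convexHull ℝ (frontier s)) :=
        closure_mono (convexHull_mono (extremePoints_convexHull_subset_frontier hs.isClosed))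
    _ = convexHull ℝ (frontier s) :=
        (isCompact_convexHull hfr).isClosed.closure_eq

theorem exists_closedBall_subset_convexHull {Y Z : Set E} {R : ℝ}
    (hroll : ∀ z ∈ Z, ∃ a, z ∈ closedBall a R ∧ closedBall a R ⊆ Y)
    {y : E} (hy : y ∈ convexHull ℝ Z) :
    ∃ b, y ∈ closedBall b R ∧ closedBall b R ⊆ convexHull ℝ Y := by
  set A := {a | closedBall a R ⊆ Y}
  have hZ : Z ⊆ A + closedBall (0 : E) R := fun z hz => by
    obtain ⟨a, hza, ha⟩ := hroll z hz
    exact ⟨a, ha, z - a, by simpa [dist_eq_norm] using hza, add_sub_cancel a z⟩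
  have hY : A + closedBall (0 : E) R ⊆ Y := by
    rintro _ ⟨a, ha, v, hv, rfl⟩
    exact ha (by simpa using hv)
  have hull_eq :
      convexHull ℝ (A + closedBall (0 : E) R) = convexHull ℝ A + closedBall (0 : E) R := by
    rw [convexHull_add, (convex_closedBall (0 : E) R).convexHull_eq]
  obtain ⟨b, hb, v, hv, rfl⟩ : y ∈ convexHull ℝ A + closedBall (0 : E) R :=
    hull_eq ▸ convexHull_mono hZ hy
  refine ⟨b, by simpa using hv, ?_⟩
  calc closedBall b R = {b} + closedBall (0 : E) R := by rw [singleton_add_closedBall_zero]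
    _ ⊆ convexHull ℝ A + closedBall (0 : E) R := add_subset_add_right (singleton_subset_iff.2 hb)
    _ = convexHull ℝ (A + closedBall (0 : E) R) := hull_eq.symm
    _ ⊆ convexHull ℝ Y := convexHull_mono hY

end

theorem stmt4_general (n : ℕ) (R : ℝ) (Y : Set (EuclideanSpace ℝ (Fin n)))
    (hYc : IsCompact Y)
    (hroll : ∀ y ∈ frontier Y, ∃ a, y ∈ closedBall a R ∧ closedBall a R ⊆ Y) :
    ∀ y ∈ frontier (convexHull ℝ Y), ∃ b,
      y ∈ closedBall b R ∧ closedBall b R ⊆ convexHull ℝ Y := by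
  intro y hy
  cases subsingleton_or_nontrivial (EuclideanSpace ℝ (Fin n))
  · simp at hy
  have hyY : y ∈ convexHull ℝ Y := (isCompact_convexHull hYc).isClosed.frontier_subset hy
  rw [← hYc.convexHull_frontier] at hyY
  exact exists_closedBall_subset_convexHull hroll hyY

/-- If a closed ball of radius `R > 0` rolls freely inside a nonempty compact set
`Y ⊆ ℝ^n`, then a closed ball of radius `R` rolls freely inside `convexHull ℝ Y`. -/
theorem stmt4 (n : ℕ) (R : ℝ) (hR : 0 < R) (Y : Set (EuclideanSpace ℝ (Fin n)))
    (hYne : Y.Nonempty) (hYc : IsCompact Y)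
    (hroll : ∀ y ∈ frontier Y, ∃ a, y ∈ closedBall a R ∧ closedBall a R ⊆ Y) :
    ∀ y ∈ frontier (convexHull ℝ Y), ∃ b,
      y ∈ closedBall b R ∧ closedBall b R ⊆ convexHull ℝ Y :=
  stmt4_general n R Y hYc hroll
end

section
/- Let X ⊆ ℝ^n be a nonempty closed convex set. Then a ball of every radius R > 0 rolls freely in the closure of the complement of X: for every x ∈ ∂X there exists a point a such that x ∈ B(a, R) ⊆ closure(Xᶜ). -/
open Metric Filter Topology

open scoped RealInnerProductSpace

/-
Every boundary point `x` of a closed convex set `X` admits an outer unit normal `w`, i.e.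
`⟪w, z - x⟫ ≤ 0` on `X`: it is a limit of the normals `u - p` from points `u ∉ X` near `x` to
their nearest points `p ∈ X`, extracted by compactness of the unit sphere. The open ball of
radius `R` centred at `x + R • w` lies in the open half-space `⟪w, z - x⟫ > 0`, hence misses `X`,
and its closure is the closed ball, which contains `x`.
-/

variable {E : Type*} [NormedAddCommGroup E] [InnerProductSpace ℝ E]

theorem ball_add_subset_inner_pos (x w : E) :
    ball (x + w) ‖w‖ ⊆ {z | 0 < ⟪w, z - x⟫} := by
  intro z hz
  rw [mem_ball, dist_eq_norm, sub_add_eq_sub_sub] at hz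
  have hsq : ‖z - x - w‖ ^ 2 = ‖z - x‖ ^ 2 - 2 * ⟪z - x, w⟫ + ‖w‖ ^ 2 := norm_sub_sq_real _ _
  have hlt : ‖z - x - w‖ ^ 2 < ‖w‖ ^ 2 := by gcongr
  have := sq_nonneg ‖z - x‖
  rw [Set.mem_ofPred_eq, real_inner_comm]
  linarith

theorem closedBall_subset_closure_compl_of_inner_nonpos {X : Set E} {x w : E} {R : ℝ}
    (hR : 0 < R) (hw : ‖w‖ = 1) (hsupp : ∀ z ∈ X, ⟪w, z - x⟫ ≤ 0) :
    closedBall (x + R • w) R ⊆ closure Xᶜ := by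
  have hRw : ‖R • w‖ = R := by rw [norm_smul, hw, mul_one, Real.norm_of_nonneg hR.le]
  have hball : ball (x + R • w) R ⊆ Xᶜ := fun z hz hzX => by
    have hpos : 0 < ⟪R • w, z - x⟫ := ball_add_subset_inner_pos x (R • w) (by rwa [hRw])
    rw [real_inner_smul_left] at hpos
    exact (mul_pos_iff_of_pos_left hR).mp hpos |>.not_ge (hsupp z hzX)
  rw [← closure_ball _ hR.ne']
  exact closure_mono hball

theorem exists_unit_normal_near_of_notMem {X : Set E} (hXc : IsComplete X)
    (hXconv : Convex ℝ X) {x u : E} (hx : x ∈ X) (hu : u ∉ X) :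
    ∃ p v : E, ‖p - x‖ ≤ 2 * ‖u - x‖ ∧ ‖v‖ = 1 ∧ ∀ z ∈ X, ⟪v, z - p⟫ ≤ 0 := by
  obtain ⟨p, hpX, hpmin⟩ := exists_norm_eq_iInf_of_complete_convex ⟨x, hx⟩ hXc hXconv u
  have hup : u - p ≠ 0 := sub_ne_zero.mpr (ne_of_mem_of_not_mem hpX hu).symm
  have hpu : ‖u - p‖ ≤ ‖u - x‖ :=
    hpmin ▸ ciInf_le ⟨0, by rintro r ⟨w, rfl⟩; positivity⟩ (⟨x, hx⟩ : X)
  refine ⟨p, ‖u - p‖⁻¹ • (u - p), ?_, norm_smul_inv_norm hup, fun z hz => ?_⟩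
  · calc ‖p - x‖ ≤ ‖p - u‖ + ‖u - x‖ := norm_sub_le_norm_sub_add_norm_sub _ _ _
      _ ≤ 2 * ‖u - x‖ := by rw [norm_sub_rev]; linarith
  · rw [real_inner_smul_left]
    exact mul_nonpos_of_nonneg_of_nonpos (by positivity)
      ((norm_eq_iInf_iff_real_inner_le_zero hXconv hpX).mp hpmin z hz)

theorem exists_unit_normal_of_mem_frontier [FiniteDimensional ℝ E] {X : Set E}
    (hXcl : IsClosed X) (hXconv : Convex ℝ X) {x : E} (hx : x ∈ frontier X) :
    ∃ w : E, ‖w‖ = 1 ∧ ∀ z ∈ X, ⟪w, z - x⟫ ≤ 0 := by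
  have hxX : x ∈ X := hXcl.frontier_subset hx
  obtain ⟨u, hu, hux⟩ := mem_closure_iff_seq_limit.mp (frontier_eq_closure_inter_closure.subset hx).2
  choose p v hpx hv hsupp using fun k =>
    exists_unit_normal_near_of_notMem hXcl.isComplete hXconv hxX (hu k)
  have hp : Tendsto p atTop (𝓝 x) := by
    rw [tendsto_iff_norm_sub_tendsto_zero] at hux ⊢
    exact squeeze_zero (fun k => norm_nonneg _) hpx (by simpa using hux.const_mul 2)
  obtain ⟨w, hw, φ, hφ, hvw⟩ :=
    (isCompact_sphere (0 : E) 1).tendsto_subseq (fun k => mem_sphere_zero_iff_norm.mpr (hv k))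
  refine ⟨w, mem_sphere_zero_iff_norm.mp hw, fun z hz => ?_⟩
  have hlim : Tendsto (fun k => ⟪v (φ k), z - p (φ k)⟫) atTop (𝓝 ⟪w, z - x⟫) :=
    hvw.inner ((hp.comp hφ.tendsto_atTop).const_sub z)
  exact le_of_tendsto' hlim fun k => hsupp (φ k) z hz

theorem stmt5_general (n : ℕ) (X : Set (EuclideanSpace ℝ (Fin n)))
    (hXcl : IsClosed X) (hXconv : Convex ℝ X) :
    ∀ R > (0 : ℝ), ∀ x ∈ frontier X, ∃ a,
      x ∈ closedBall a R ∧ closedBall a R ⊆ closure Xᶜ := by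
  intro R hR x hx
  obtain ⟨w, hw, hsupp⟩ := exists_unit_normal_of_mem_frontier hXcl hXconv hx
  refine ⟨x + R • w, ?_, closedBall_subset_closure_compl_of_inner_nonpos hR hw hsupp⟩
  rw [mem_closedBall, dist_comm, dist_self_add_left, norm_smul, hw, mul_one, Real.norm_of_nonneg hR.le]

/-- For a nonempty closed convex set `X ⊆ ℝ^n`, a ball of every radius `R > 0` rolls
freely in the closure of the complement of `X`. -/
theorem stmt5 (n : ℕ) (X : Set (EuclideanSpace ℝ (Fin n)))
    (hXne : X.Nonempty) (hXcl : IsClosed X) (hXconv : Convex ℝ X) :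
    ∀ R > (0 : ℝ), ∀ x ∈ frontier X, ∃ a,
      x ∈ closedBall a R ∧ closedBall a R ⊆ closure Xᶜ :=
  stmt5_general n X hXcl hXconv
end

section
/- Let A ⊆ ℝ^m be a nonempty compact set such that for every x ∈ ∂A there exists a with x ∈ B(a, r) ⊆ A (a ball of radius r rolls freely in A), and let π : ℝ^m → ℝ^n be the projection onto the first n coordinates (n ≤ m). Then for every y ∈ ∂π(A) there exists b ∈ ℝ^n with y ∈ B(b, r) ⊆ π(A). -/
/-!
A coordinate projection `π` maps every closed ball `B(a, r)` onto `B(π a, r)`: it is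
`1`-Lipschitz, and a point `z` near `π a` lifts to the point that agrees with `z` on the kept
coordinates and with `a` on the others. In particular `π` is continuous and open, so for
compact `A` the image `π(A)` is closed and `∂π(A) ⊆ π(∂A)`. A boundary point `y = π x` of
`π(A)` thus comes from some `x ∈ ∂A`, which lies in a ball `B(a, r) ⊆ A`, and then
`y ∈ B(π a, r) = π(B(a, r)) ⊆ π(A)`.
-/

open Metric Function

def IsSubmetry {X Y : Type*} [PseudoMetricSpace X] [PseudoMetricSpace Y] (f : X → Y) : Prop :=
  ∀ a r, f '' closedBall a r = closedBall (f a) r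

def BallRollsFreely {X : Type*} [PseudoMetricSpace X] (A : Set X) (r : ℝ) : Prop :=
  ∀ x ∈ frontier A, ∃ a, x ∈ closedBall a r ∧ closedBall a r ⊆ A

namespace IsSubmetry

variable {X Y : Type*} [PseudoMetricSpace X] [PseudoMetricSpace Y] {f : X → Y}

lemma dist_le (hf : IsSubmetry f) (x a : X) : dist (f x) (f a) ≤ dist x a := by
  have : f x ∈ f '' closedBall a (dist x a) := ⟨x, mem_closedBall.2 le_rfl, rfl⟩
  rwa [hf, mem_closedBall] at this

lemma continuous (hf : IsSubmetry f) : Continuous f :=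
  (LipschitzWith.of_dist_le_mul (K := 1) fun x a => by simpa using hf.dist_le x a).continuous

lemma isOpenMap (hf : IsSubmetry f) : IsOpenMap f := by
  refine fun U hU => isOpen_iff.2 ?_
  rintro _ ⟨x, hx, rfl⟩
  obtain ⟨ε, hε, hball⟩ := isOpen_iff.1 hU x hx
  refine ⟨ε, hε, fun z hz => ?_⟩
  have hz' : z ∈ closedBall (f x) (dist z (f x)) := mem_closedBall.2 le_rfl
  rw [← hf] at hz'
  obtain ⟨x', hx', rfl⟩ := hz'
  exact ⟨x', hball (mem_ball.2 ((mem_closedBall.1 hx').trans_lt hz)), rfl⟩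

end IsSubmetry

lemma IsOpenMap.frontier_image_subset {X Y : Type*} [TopologicalSpace X] [TopologicalSpace Y]
    {f : X → Y} (hf : IsOpenMap f) {A : Set X} (hA : IsClosed (f '' A)) :
    frontier (f '' A) ⊆ f '' frontier A := by
  intro y hy
  obtain ⟨x, hxA, rfl⟩ := hA.frontier_subset hy
  refine ⟨x, ⟨subset_closure hxA, fun hx => hy.2 ?_⟩, rfl⟩
  exact hf.image_interior_subset A ⟨x, hx, rfl⟩

lemma IsSubmetry.ballRollsFreely_image {X Y : Type*} [PseudoMetricSpace X] [MetricSpace Y]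
    {f : X → Y} (hf : IsSubmetry f) {A : Set X} (hA : IsCompact A) {r : ℝ}
    (hroll : BallRollsFreely A r) : BallRollsFreely (f '' A) r := by
  intro y hy
  obtain ⟨x, hx, rfl⟩ :=
    hf.isOpenMap.frontier_image_subset ((hA.image hf.continuous).isClosed) hy
  obtain ⟨a, hxa, haA⟩ := hroll x hx
  refine ⟨f a, ?_, ?_⟩
  · rw [← hf]
    exact Set.mem_image_of_mem f hxa
  · rw [← hf]
    exact Set.image_mono haA

section CoordinateProjection

variable {ι κ : Type*} [Fintype ι] [Fintype κ] {e : ι → κ}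
  {π : EuclideanSpace ℝ κ → EuclideanSpace ℝ ι}

lemma dist_le_of_apply_eq_comp (he : Injective e) (hπ : ∀ x i, π x i = x (e i))
    (x a : EuclideanSpace ℝ κ) : dist (π x) (π a) ≤ dist x a := by
  rw [EuclideanSpace.dist_eq, EuclideanSpace.dist_eq]
  refine Real.sqrt_le_sqrt ?_
  simp only [hπ]
  exact (Finset.sum_map Finset.univ ⟨e, he⟩ fun k => dist (x k) (a k) ^ 2).symm.trans_le
    (Finset.sum_le_univ_sum_of_nonneg fun _ => sq_nonneg _)

lemma exists_lift_of_apply_eq_comp (he : Injective e) (hπ : ∀ x i, π x i = x (e i))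
    (a : EuclideanSpace ℝ κ) (z : EuclideanSpace ℝ ι) :
    ∃ x, π x = z ∧ dist x a = dist z (π a) := by
  set x : EuclideanSpace ℝ κ := WithLp.toLp 2 (extend e z a)
  have hx : ∀ i, x (e i) = z i := he.extend_apply z a
  refine ⟨x, PiLp.ext fun i => (hπ x i).trans (hx i), ?_⟩
  rw [EuclideanSpace.dist_eq, EuclideanSpace.dist_eq]
  congr 1
  refine (Fintype.sum_of_injective e he _ _ (fun k hk => ?_) fun i => by rw [hx, hπ]).symm
  rw [show x k = a k from extend_apply' z a k hk, dist_self]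
  simp

lemma isSubmetry_of_apply_eq_comp (he : Injective e) (hπ : ∀ x i, π x i = x (e i)) :
    IsSubmetry π := by
  intro a r
  ext z
  constructor
  · rintro ⟨x, hx, rfl⟩
    exact (dist_le_of_apply_eq_comp he hπ x a).trans hx
  · intro hz
    obtain ⟨x, rfl, hd⟩ := exists_lift_of_apply_eq_comp he hπ a z
    exact ⟨x, mem_closedBall.2 (hd.trans_le hz), rfl⟩

end CoordinateProjection

theorem stmt7_general (m n : ℕ) (hnm : n ≤ m) (r : ℝ)
    (A : Set (EuclideanSpace ℝ (Fin m))) (hAc : IsCompact A)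
    (hroll : ∀ x ∈ frontier A, ∃ a, x ∈ closedBall a r ∧ closedBall a r ⊆ A)
    (π : EuclideanSpace ℝ (Fin m) → EuclideanSpace ℝ (Fin n))
    (hπ : ∀ x i, π x i = x (Fin.castLE hnm i)) :
    ∀ y ∈ frontier (π '' A), ∃ b, y ∈ closedBall b r ∧ closedBall b r ⊆ π '' A :=
  IsSubmetry.ballRollsFreely_image (isSubmetry_of_apply_eq_comp (Fin.castLE_injective hnm) hπ)
    hAc hroll

/-- If a ball of radius `r` rolls freely inside a nonempty compact set `A ⊆ ℝ^m` and
`π : ℝ^m → ℝ^n` is the projection onto the first `n ≤ m` coordinates, then a ball of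
radius `r` rolls freely inside `π(A)`. -/
theorem stmt7 (m n : ℕ) (hnm : n ≤ m) (r : ℝ) (hr : 0 < r)
    (A : Set (EuclideanSpace ℝ (Fin m))) (hAne : A.Nonempty) (hAc : IsCompact A)
    (hroll : ∀ x ∈ frontier A, ∃ a, x ∈ closedBall a r ∧ closedBall a r ⊆ A)
    (π : EuclideanSpace ℝ (Fin m) → EuclideanSpace ℝ (Fin n))
    (hπ : ∀ x i, π x i = x (Fin.castLE hnm i)) :
    ∀ y ∈ frontier (π '' A), ∃ b, y ∈ closedBall b r ∧ closedBall b r ⊆ π '' A :=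
  stmt7_general m n hnm r A hAc hroll π hπ
end

section
/- Let X ⊆ ℝ^n be a convex compact set with nonempty interior such that at every boundary point x there is a unique unit outward normal n(x) (i.e., y·n(x) ≤ x·n(x) for all y ∈ X) and the normal map is (1/R)-Lipschitz: ‖n(x) − n(y)‖ ≤ ‖x − y‖/R for all x, y ∈ ∂X. If Z ⊆ ∂X satisfies ∂X ⊆ Z + B(0, δ), then d_H(X, hull(Z)) ≤ δ²/R. -/
/-!
For a unit vector `u`, let `x ∈ ∂X` maximise `⟪·, u⟫` on `X`, so `u = n(x)`, and pick `z ∈ Z`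
with `‖x - z‖ ≤ δ`. Since `n(z)` supports `X` at `z`, `⟪x - z, n(z)⟫ ≤ 0`, and the Lipschitz bound
on `n` gives `⟪x - z, u⟫ ≤ ‖x - z‖ ‖n(x) - n(z)‖ ≤ δ² / R`: the support functions of `X` and
`hull Z` differ by at most `δ² / R`. Projecting a point `y ∈ X` onto `closure (hull Z)` and
testing with the unit vector pointing from the projection to `y` turns this into
`infDist y (hull Z) ≤ δ² / R`.
-/

open Metric Pointwise
open scoped RealInnerProductSpace

section InnerProductSpace

variable {E : Type*} [NormedAddCommGroup E] [InnerProductSpace ℝ E]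

theorem IsMaxOn.inner_right_eq_zero_of_mem_interior {X : Set E} {x u : E}
    (hmax : IsMaxOn (fun y => ⟪u, y⟫) X x) (hx : x ∈ interior X) : u = 0 := by
  have hfermat := (hmax.isLocalMax (mem_interior_iff_mem_nhds.1 hx)).hasFDerivAt_eq_zero
    (innerSL ℝ u).hasFDerivAt
  simpa using congr($hfermat u)

theorem IsCompact.exists_mem_frontier_forall_inner_le {X : Set E} (hXc : IsCompact X)
    (hXne : X.Nonempty) {u : E} (hu : u ≠ 0) :
    ∃ x ∈ frontier X, ∀ y ∈ X, ⟪y, u⟫ ≤ ⟪x, u⟫ := by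
  obtain ⟨x, hxX, hmax⟩ := hXc.exists_isMaxOn hXne
    (continuous_const.inner continuous_id : Continuous fun y : E => ⟪u, y⟫).continuousOn
  refine ⟨x, ⟨subset_closure hxX, fun hx => hu (hmax.inner_right_eq_zero_of_mem_interior hx)⟩,
    fun y hy => ?_⟩
  rw [real_inner_comm u y, real_inner_comm u x]
  exact hmax hy

theorem inner_sub_le_sq_div_of_norm_sub_le {x z nx nz : E} {R : ℝ} (hz : ⟪x - z, nz⟫ ≤ 0)
    (hlip : ‖nx - nz‖ ≤ ‖x - z‖ / R) : ⟪x - z, nx⟫ ≤ ‖x - z‖ ^ 2 / R :=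
  calc ⟪x - z, nx⟫ = ⟪x - z, nx - nz⟫ + ⟪x - z, nz⟫ := by rw [inner_sub_right]; ring
    _ ≤ ‖x - z‖ * ‖nx - nz‖ + 0 := add_le_add (real_inner_le_norm _ _) hz
    _ ≤ ‖x - z‖ * (‖x - z‖ / R) := by
      simpa using mul_le_mul_of_nonneg_left hlip (norm_nonneg _)
    _ = ‖x - z‖ ^ 2 / R := by ring

theorem infDist_le_of_forall_inner_le [CompleteSpace E] {K : Set E} (hKconv : Convex ℝ K)
    (hKne : K.Nonempty) {t : ℝ} (ht : 0 ≤ t) {y : E}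
    (hsupp : ∀ u : E, ‖u‖ = 1 → ∃ z ∈ K, ⟪y, u⟫ ≤ ⟪z, u⟫ + t) : infDist y K ≤ t := by
  rw [← infDist_closure]
  obtain ⟨v, hvK, hv⟩ := exists_norm_eq_iInf_of_complete_convex hKne.closure
    isClosed_closure.isComplete hKconv.closure y
  have hproj := (norm_eq_iInf_iff_real_inner_le_zero hKconv.closure hvK).1 hv
  refine (infDist_le_dist_of_mem hvK).trans ?_
  rw [dist_eq_norm]
  rcases eq_or_ne (y - v) 0 with hyv | hyv
  · simpa [hyv] using ht
  set u := ‖y - v‖⁻¹ • (y - v)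
  obtain ⟨z, hzK, hz⟩ := hsupp u (norm_smul_inv_norm hyv)
  have hzv : ⟪z - v, u⟫ ≤ 0 := by
    simpa [u, real_inner_smul_right, real_inner_comm] using
      mul_nonpos_of_nonneg_of_nonpos (inv_nonneg.2 (norm_nonneg (y - v)))
        (hproj z (subset_closure hzK))
  have hyu : ⟪y - v, u⟫ = ‖y - v‖ := by
    rw [real_inner_smul_right, real_inner_self_eq_norm_sq]
    field_simp [norm_ne_zero_iff.2 hyv]
  rw [inner_sub_left] at hzv hyu
  linarith

theorem exists_mem_inner_le_add_sq_div {X Z : Set E} {nmap : E → E} {R δ : ℝ} (hR : 0 ≤ R)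
    (hXc : IsCompact X) (hXne : X.Nonempty)
    (hnormal : ∀ x ∈ frontier X, ∀ y ∈ X, ⟪y, nmap x⟫ ≤ ⟪x, nmap x⟫)
    (huniq : ∀ x ∈ frontier X, ∀ u : E, ‖u‖ = 1 → (∀ y ∈ X, ⟪y, u⟫ ≤ ⟪x, u⟫) → u = nmap x)
    (hlip : ∀ x ∈ frontier X, ∀ y ∈ frontier X, ‖nmap x - nmap y‖ ≤ ‖x - y‖ / R)
    (hZX : Z ⊆ frontier X) (hcov : frontier X ⊆ Z + closedBall (0 : E) δ) {u : E}
    (hu : ‖u‖ = 1) : ∃ z ∈ Z, ∀ y ∈ X, ⟪y, u⟫ ≤ ⟪z, u⟫ + δ ^ 2 / R := by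
  obtain ⟨x, hx, hxmax⟩ := hXc.exists_mem_frontier_forall_inner_le hXne
    (ne_zero_of_norm_ne_zero (hu.symm ▸ one_ne_zero))
  obtain ⟨z, hzZ, b, hb, hzb⟩ := hcov hx
  have hz := hZX hzZ
  have hnear : ‖x - z‖ ≤ δ := by
    rw [← hzb, add_sub_cancel_left]
    simpa using hb
  have hcurv : ⟪x - z, u⟫ ≤ ‖x - z‖ ^ 2 / R := by
    rw [huniq x hx u hu hxmax]
    refine inner_sub_le_sq_div_of_norm_sub_le ?_ (hlip x hx z hz)
    rw [inner_sub_left]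
    linarith [hnormal z hz x (hXc.isClosed.frontier_subset hx)]
  have hsq : ‖x - z‖ ^ 2 / R ≤ δ ^ 2 / R := by gcongr
  refine ⟨z, hzZ, fun y hy => ?_⟩
  rw [inner_sub_left] at hcurv
  linarith [hxmax y hy]

end InnerProductSpace

theorem stmt11_general (n : ℕ) (R δ : ℝ) (hR : 0 < R)
    (X : Set (EuclideanSpace ℝ (Fin n))) (hXc : IsCompact X) (hXconv : Convex ℝ X)
    (nmap : EuclideanSpace ℝ (Fin n) → EuclideanSpace ℝ (Fin n))
    (hnorm : ∀ x ∈ frontier X, ‖nmap x‖ = 1 ∧ ∀ y ∈ X, ⟪y, nmap x⟫ ≤ ⟪x, nmap x⟫)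
    (huniq : ∀ x ∈ frontier X, ∀ u : EuclideanSpace ℝ (Fin n), ‖u‖ = 1 →
      (∀ y ∈ X, ⟪y, u⟫ ≤ ⟪x, u⟫) → u = nmap x)
    (hlip : ∀ x ∈ frontier X, ∀ y ∈ frontier X, ‖nmap x - nmap y‖ ≤ ‖x - y‖ / R)
    (Z : Set (EuclideanSpace ℝ (Fin n))) (hZX : Z ⊆ frontier X)
    (hcov : frontier X ⊆ Z + closedBall (0 : EuclideanSpace ℝ (Fin n)) δ) :
    hausdorffDist X (convexHull ℝ Z) ≤ δ ^ 2 / R := by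
  have ht : 0 ≤ δ ^ 2 / R := by positivity
  rcases Z.eq_empty_or_nonempty with rfl | hZne
  · simpa using ht
  have hZX' : Z ⊆ X := hZX.trans hXc.isClosed.frontier_subset
  refine hausdorffDist_le_of_infDist ht (fun y hy => ?_) fun y hy => ?_
  · refine infDist_le_of_forall_inner_le (convex_convexHull ℝ Z)
      (hZne.mono (subset_convexHull ℝ Z)) ht fun u hu => ?_
    obtain ⟨z, hz, hle⟩ := exists_mem_inner_le_add_sq_div hR.le hXc (hZne.mono hZX')
      (fun x hx => (hnorm x hx).2) huniq hlip hZX hcov hu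
    exact ⟨z, subset_convexHull ℝ Z hz, hle y hy⟩
  · rw [infDist_zero_of_mem (convexHull_min hZX' hXconv hy)]
    exact ht

/-- Dümbgen–Walther bound: if `X ⊆ ℝ^n` is convex compact with nonempty interior and a
unique `(1/R)`-Lipschitz unit outward normal map on `∂X`, and `Z ⊆ ∂X` is a `δ`-cover of
`∂X`, then `d_H(X, hull Z) ≤ δ²/R`. -/
theorem stmt11 (n : ℕ) (R δ : ℝ) (hR : 0 < R) (hδ : 0 < δ)
    (X : Set (EuclideanSpace ℝ (Fin n))) (hXc : IsCompact X) (hXconv : Convex ℝ X)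
    (hXint : (interior X).Nonempty)
    (nmap : EuclideanSpace ℝ (Fin n) → EuclideanSpace ℝ (Fin n))
    (hnorm : ∀ x ∈ frontier X, ‖nmap x‖ = 1 ∧ ∀ y ∈ X, ⟪y, nmap x⟫ ≤ ⟪x, nmap x⟫)
    (huniq : ∀ x ∈ frontier X, ∀ u : EuclideanSpace ℝ (Fin n), ‖u‖ = 1 →
      (∀ y ∈ X, ⟪y, u⟫ ≤ ⟪x, u⟫) → u = nmap x)
    (hlip : ∀ x ∈ frontier X, ∀ y ∈ frontier X, ‖nmap x - nmap y‖ ≤ ‖x - y‖ / R)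
    (Z : Set (EuclideanSpace ℝ (Fin n))) (hZX : Z ⊆ frontier X)
    (hcov : frontier X ⊆ Z + closedBall (0 : EuclideanSpace ℝ (Fin n)) δ) :
    hausdorffDist X (convexHull ℝ Z) ≤ δ ^ 2 / R :=
  stmt11_general n R δ hR X hXc hXconv nmap hnorm huniq hlip Z hZX hcov
end

section
/- Let X be a nonempty compact subset of ℝ^m, δ > 0, and let P be a Borel probability measure on ℝ^m supported on ∂X such that P(B(x, δ/2)) ≥ Λ > 0 for all x ∈ ∂X. Let x₁, …, x_M be i.i.d. samples from P and let N be the internal (δ/2)-covering number of ∂X. Then with probability at least 1 − N(1 − Λ)^M, the sample {x₁,…,x_M} is a δ-cover of ∂X, i.e., ∂X ⊆ {x₁,…,x_M} + B(0, δ). -/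
open Metric Pointwise MeasureTheory

/-- If `P` is a Borel probability measure supported on `∂X` with `P(B(x, δ/2)) ≥ Λ > 0`
for all `x ∈ ∂X`, and `N` is the internal `(δ/2)`-covering number of `∂X`, then `M`
i.i.d. samples from `P` form a `δ`-cover of `∂X` with probability at least
`1 − N (1 − Λ)^M`. -/
theorem stmt14 (m : ℕ) (X : Set (EuclideanSpace ℝ (Fin m)))
    (hXne : X.Nonempty) (hXc : IsCompact X) (δ Λ : ℝ) (hδ : 0 < δ) (hΛ : 0 < Λ)
    (P : Measure (EuclideanSpace ℝ (Fin m))) [IsProbabilityMeasure P]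
    (hsupp : P (frontier X) = 1)
    (hball : ∀ x ∈ frontier X, ENNReal.ofReal Λ ≤ P (closedBall x (δ / 2)))
    (M N : ℕ)
    (hN : N = sInf {k : ℕ | ∃ F : Finset (EuclideanSpace ℝ (Fin m)),
      ↑F ⊆ frontier X ∧ F.card = k ∧
      frontier X ⊆ ⋃ z ∈ F, closedBall z (δ / 2)}) :
    ENNReal.ofReal (1 - N * (1 - Λ) ^ M) ≤
      (Measure.pi fun _ : Fin M => P)
        {ω : Fin M → EuclideanSpace ℝ (Fin m) |
          frontier X ⊆ Set.range ω + closedBall (0 : EuclideanSpace ℝ (Fin m)) δ} := by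
  set μ := (Measure.pi fun _ : Fin M => P)
  have hμprob : IsProbabilityMeasure μ := by infer_instance
  -- Λ ≤ 1
  have hfrne : (frontier X).Nonempty := by
    rcases Set.eq_empty_or_nonempty (frontier X) with h | h
    · rw [h, measure_empty] at hsupp; exact absurd hsupp one_ne_zero.symm
    · exact h
  obtain ⟨x₀, hx₀⟩ := hfrne
  have hΛ1 : Λ ≤ 1 := by
    have := (hball x₀ hx₀).trans (prob_le_one (μ := P))
    rwa [← ENNReal.ofReal_one, ENNReal.ofReal_le_ofReal_iff zero_le_one] at this
  have h1Λ : (0:ℝ) ≤ 1 - Λ := by linarith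
  -- frontier is compact
  have hfc : IsCompact (frontier X) :=
    hXc.of_isClosed_subset isClosed_frontier
      ((frontier_subset_closure).trans (IsClosed.closure_subset hXc.isClosed))
  -- existence of a finite internal cover
  have hcov : ∃ t : Finset (EuclideanSpace ℝ (Fin m)), (∀ x ∈ t, x ∈ frontier X) ∧
      frontier X ⊆ ⋃ x ∈ t, ball x (δ / 2) := by
    apply hfc.elim_nhds_subcover (fun x => ball x (δ / 2))
    intro x _
    exact ball_mem_nhds x (by linarith)
  obtain ⟨t, htsub, htcov⟩ := hcov
  have hSne : {k : ℕ | ∃ F : Finset (EuclideanSpace ℝ (Fin m)),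
      ↑F ⊆ frontier X ∧ F.card = k ∧
      frontier X ⊆ ⋃ z ∈ F, closedBall z (δ / 2)}.Nonempty := by
    exact ⟨t.card, t, htsub, rfl, htcov.trans (Set.iUnion₂_mono fun z _ => ball_subset_closedBall)⟩
  have hNmem := hN ▸ Nat.sInf_mem hSne
  obtain ⟨F, hFsub, hFcard, hFcov⟩ := hNmem
  -- the good event
  set G : Set (Fin M → EuclideanSpace ℝ (Fin m)) :=
    {ω | ∀ z ∈ F, ∃ i, ω i ∈ closedBall z (δ / 2)} with hG
  -- G is contained in the target event
  have hGsub : G ⊆ {ω : Fin M → EuclideanSpace ℝ (Fin m) |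
      frontier X ⊆ Set.range ω + closedBall (0 : EuclideanSpace ℝ (Fin m)) δ} := by
    intro ω hω x hx
    obtain ⟨z, hz, hxz⟩ := Set.mem_iUnion₂.mp (hFcov hx)
    obtain ⟨i, hi⟩ := hω z hz
    refine Set.mem_add.mpr ⟨ω i, ⟨i, rfl⟩, x - ω i, ?_, by abel⟩
    rw [mem_closedBall, dist_eq_norm, sub_zero]
    have : dist x (ω i) ≤ δ := by
      calc dist x (ω i) ≤ dist x z + dist z (ω i) := dist_triangle _ _ _
        _ ≤ δ / 2 + δ / 2 := add_le_add (mem_closedBall.mp hxz) (dist_comm z (ω i) ▸ mem_closedBall.mp hi)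
        _ = δ := by ring
    rwa [dist_eq_norm] at this
  -- union bound on the complement
  have hcompl : μ Gᶜ ≤ (N : ENNReal) * (ENNReal.ofReal (1 - Λ)) ^ M := by
    have hsub : Gᶜ ⊆ ⋃ z ∈ F, Set.pi Set.univ (fun _ : Fin M => (closedBall z (δ / 2))ᶜ) := by
      intro ω hω
      simp only [hG, Set.mem_compl_iff, Set.mem_setOf_eq, not_forall] at hω
      obtain ⟨z, hz, hnone⟩ := hω
      push_neg at hnone
      exact Set.mem_iUnion₂.mpr ⟨z, hz, fun i _ => hnone i⟩
    calc μ Gᶜ ≤ ∑ z ∈ F, μ (Set.pi Set.univ (fun _ : Fin M => (closedBall z (δ / 2))ᶜ)) :=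
          (measure_mono hsub).trans (measure_biUnion_finset_le F _)
      _ ≤ ∑ _z ∈ F, (ENNReal.ofReal (1 - Λ)) ^ M := by
          apply Finset.sum_le_sum
          intro z hz
          rw [Measure.pi_pi, Finset.prod_const, Finset.card_univ, Fintype.card_fin]
          apply pow_le_pow_left' _ M
          have hPz : P ((closedBall z (δ / 2))ᶜ) = 1 - P (closedBall z (δ / 2)) :=
            prob_compl_eq_one_sub measurableSet_closedBall
          rw [hPz, ENNReal.ofReal_sub _ hΛ.le, ENNReal.ofReal_one]
          exact tsub_le_tsub_left (hball z (hFsub hz)) 1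
      _ = (N : ENNReal) * (ENNReal.ofReal (1 - Λ)) ^ M := by
          rw [Finset.sum_const, hFcard, nsmul_eq_mul]
  -- conclude
  calc ENNReal.ofReal (1 - N * (1 - Λ) ^ M)
      = 1 - (N : ENNReal) * (ENNReal.ofReal (1 - Λ)) ^ M := by
        rw [ENNReal.ofReal_sub _ (by positivity), ENNReal.ofReal_one,
          ENNReal.ofReal_mul (by positivity), ENNReal.ofReal_pow h1Λ,
          ENNReal.ofReal_natCast]
    _ ≤ 1 - μ Gᶜ := tsub_le_tsub_left hcompl 1
    _ ≤ μ G := by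
        rw [tsub_le_iff_right]
        calc (1 : ENNReal) = μ Set.univ := (measure_univ).symm
          _ = μ (G ∪ Gᶜ) := by rw [Set.union_compl_self]
          _ ≤ μ G + μ Gᶜ := measure_union_le _ _
    _ ≤ _ := measure_mono hGsub
end

section
/- Let X ⊆ ℝ^n be a closed set with reach(X) ≥ R > 0. Then X is R-convex: X equals the intersection over all open balls of radius R disjoint from X of the complements of those balls. Equivalently, for every x ∉ X there exists a center y with x in the open ball of radius R around y and that open ball disjoint from X. -/
/-!
Fix `x ∉ X` with `d = infDist x X < R` and `0 < λ < 1` close to `1`. Among the points `c` with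
`λ · dist c x + d ≤ infDist c X ≤ R` (a compact set containing `x`) take one maximising
`infDist c X`. If this maximum were `< R`, then `c` has a unique nearest point `p`, and moving
`c` away from `p` increases the distance to `X` at a rate tending to `1` (nearest points of
nearby points are close to `p`), so the maximum could be increased. Hence `infDist c X = R`,
and the open `R`-ball around `c` avoids `X` and contains `x`.
-/

open Metric

open scoped RealInnerProductSpace

theorem exists_pos_infDist_add_le_dist {α : Type*} [PseudoMetricSpace α] [ProperSpace α]
    {X : Set α} (hX : IsClosed X) {c p : α}
    (huniq : ∀ q ∈ X, dist c q = infDist c X → q = p) {ε : ℝ} (hε : 0 < ε) :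
    ∃ η > 0, ∀ q ∈ X, ε ≤ dist q p → infDist c X + η ≤ dist c q := by
  set S := X ∩ closedBall c (infDist c X + 1) ∩ {q | ε ≤ dist q p}
  have hS : IsCompact S :=
    ((isCompact_closedBall _ _).inter_left hX).inter_right
      (isClosed_le continuous_const (continuous_id.dist continuous_const))
  obtain ⟨η, hη, hηS⟩ : ∃ η > 0, ∀ q ∈ S, infDist c X + η ≤ dist c q := by
    rcases S.eq_empty_or_nonempty with hSe | hSne
    · exact ⟨1, one_pos, by simp [hSe]⟩
    have hdist : Continuous (dist c) := continuous_const.dist continuous_id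
    obtain ⟨q₀, hq₀, hmin⟩ := hS.exists_isMinOn hSne hdist.continuousOn
    have hgap : infDist c X < dist c q₀ := by
      refine (infDist_le_dist_of_mem hq₀.1.1).lt_of_ne fun h => ?_
      have hq₀p := huniq q₀ hq₀.1.1 h.symm
      have hq₀far : ε ≤ dist q₀ p := hq₀.2
      rw [hq₀p, dist_self] at hq₀far
      linarith
    exact ⟨dist c q₀ - infDist c X, sub_pos.mpr hgap,
      fun q hq => by linarith [isMinOn_iff.mp hmin q hq]⟩
  refine ⟨min 1 η, lt_min one_pos hη, fun q hq hqp => ?_⟩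
  by_cases hqc : dist c q ≤ infDist c X + 1
  · linarith [hηS q ⟨⟨hq, mem_closedBall'.mpr hqc⟩, hqp⟩, min_le_right 1 η]
  · linarith [min_le_left 1 η]

theorem isCompact_setOf_mul_dist_add_le_infDist_le {α : Type*} [PseudoMetricSpace α]
    [ProperSpace α] (X : Set α) (x : α) {lam : ℝ} (hlam : 0 < lam) (d R : ℝ) :
    IsCompact {c | lam * dist c x + d ≤ infDist c X ∧ infDist c X ≤ R} := by
  refine (isCompact_closedBall x ((R - d) / lam)).of_isClosed_subset
    ((isClosed_le (by fun_prop) (continuous_infDist_pt X)).inter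
      (isClosed_le (continuous_infDist_pt X) continuous_const)) fun c hc => ?_
  rw [mem_closedBall, le_div_iff₀ hlam]
  linarith [hc.1, hc.2]

section InnerProductSpace

variable {E : Type*} [NormedAddCommGroup E] [InnerProductSpace ℝ E]

theorem mul_le_dist_add_smul_sub {c p q : E} {r lam s : ℝ} (hcp : ‖c - p‖ = r)
    (hcq : r ≤ dist c q) (hqp : dist q p ≤ (1 - lam) * r) (hlam0 : 0 ≤ lam)
    (hlam1 : lam ≤ 1) (hs : 0 ≤ s) :
    (1 + lam * s) * r ≤ dist (c + s • (c - p)) q := by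
  have hr : 0 ≤ r := hcp ▸ norm_nonneg _
  have hinner : lam * r ^ 2 ≤ ⟪c - q, c - p⟫ := by
    have hbound := real_inner_le_norm (q - p) (c - p)
    rw [hcp, ← dist_eq_norm] at hbound
    rw [show c - q = (c - p) - (q - p) by abel, inner_sub_left, real_inner_self_eq_norm_sq, hcp]
    nlinarith [mul_le_mul_of_nonneg_right hqp hr]
  have hexp : dist (c + s • (c - p)) q ^ 2 =
      dist c q ^ 2 + 2 * s * ⟪c - q, c - p⟫ + s ^ 2 * r ^ 2 := by
    rw [dist_eq_norm, dist_eq_norm, show c + s • (c - p) - q = (c - q) + s • (c - p) by abel,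
      norm_add_sq_real, real_inner_smul_right, norm_smul, hcp, Real.norm_of_nonneg hs]
    ring
  have hsq : ((1 + lam * s) * r) ^ 2 ≤ dist (c + s • (c - p)) q ^ 2 := by
    rw [hexp]
    nlinarith [mul_le_mul_of_nonneg_left hinner hs, mul_self_le_mul_self hr hcq,
      mul_nonneg (mul_nonneg hs hs) (mul_nonneg hr hr), mul_le_of_le_one_left hlam0 hlam1]
  exact (pow_le_pow_iff_left₀ (by positivity) dist_nonneg two_ne_zero).mp hsq

variable [ProperSpace E]

theorem exists_pos_forall_le_infDist_add_smul {X : Set E} (hX : IsClosed X) {c p : E}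
    (hp : p ∈ X) (hcp : dist c p = infDist c X)
    (huniq : ∀ q ∈ X, dist c q = infDist c X → q = p) (hc : 0 < infDist c X)
    {lam : ℝ} (hlam0 : 0 ≤ lam) (hlam1 : lam < 1) :
    ∃ δ > 0, ∀ s, 0 < s → s < δ →
      (1 + lam * s) * infDist c X ≤ infDist (c + s • (c - p)) X := by
  set r := infDist c X
  obtain ⟨η, hη, hfar⟩ :=
    exists_pos_infDist_add_le_dist hX huniq (mul_pos (sub_pos.mpr hlam1) hc)
  refine ⟨η / (2 * r), by positivity, fun s hs hsδ => ?_⟩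
  have hnorm : ‖c - p‖ = r := by rw [← dist_eq_norm, hcp]
  rw [le_infDist ⟨p, hp⟩]
  intro q hq
  rcases le_or_gt (dist q p) ((1 - lam) * r) with hnear | hqp
  · exact mul_le_dist_add_smul_sub hnorm (infDist_le_dist_of_mem hq) hnear hlam0 hlam1.le
      hs.le
  · have hmove : dist (c + s • (c - p)) c = s * r := by
      rw [dist_eq_norm, add_sub_cancel_left, norm_smul, hnorm, Real.norm_of_nonneg hs.le]
    have hsr : s * r < η / 2 := by
      rw [lt_div_iff₀ (by positivity)] at hsδ
      linarith
    have hcq := hfar q hq hqp.le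
    have htri := dist_triangle c (c + s • (c - p)) q
    rw [dist_comm c (c + s • (c - p)), hmove] at htri
    nlinarith [mul_le_mul_of_nonneg_left hlam1.le (mul_pos hs hc).le]

theorem exists_lt_infDist_of_infDist_lt {X : Set E} (hX : IsClosed X) {R : ℝ}
    (hreach : ∀ y, infDist y X < R → ∃! x, x ∈ X ∧ dist y x = infDist y X)
    {c : E} (hc : 0 < infDist c X) (hcR : infDist c X < R) {lam : ℝ} (hlam0 : 0 < lam)
    (hlam1 : lam < 1) :
    ∃ c', lam * dist c' c + infDist c X ≤ infDist c' X ∧ infDist c' X ≤ R ∧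
      infDist c X < infDist c' X := by
  set r := infDist c X
  obtain ⟨p, ⟨hp, hcp⟩, huniq⟩ := hreach c hcR
  obtain ⟨δ, hδ, hgrow⟩ := exists_pos_forall_le_infDist_add_smul hX hp hcp
    (fun q hq hcq => huniq q ⟨hq, hcq⟩) hc hlam0.le hlam1
  set s := min (δ / 2) ((R - r) / r)
  have hs : 0 < s := lt_min (half_pos hδ) (div_pos (sub_pos.mpr hcR) hc)
  have hsR : (1 + s) * r ≤ R := by
    have := mul_le_mul_of_nonneg_right (min_le_right (δ / 2) ((R - r) / r)) hc.le
    rw [div_mul_cancel₀ _ hc.ne'] at this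
    linarith
  have hgrow' := hgrow s hs ((min_le_left _ _).trans_lt (half_lt_self hδ))
  have hnorm : ‖c - p‖ = r := by rw [← dist_eq_norm, hcp]
  have hmove : dist (c + s • (c - p)) c = s * r := by
    rw [dist_eq_norm, add_sub_cancel_left, norm_smul, hnorm, Real.norm_of_nonneg hs.le]
  have hfar : dist (c + s • (c - p)) p = (1 + s) * r := by
    rw [dist_eq_norm, show c + s • (c - p) - p = (1 + s) • (c - p) by module, norm_smul, hnorm,
      Real.norm_of_nonneg (by linarith)]
  refine ⟨c + s • (c - p), ?_, ?_, ?_⟩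
  · rw [hmove]
    linarith
  · exact (infDist_le_dist_of_mem hp).trans (hfar.trans_le hsR)
  · nlinarith [mul_pos (mul_pos hlam0 hs) hc]

theorem exists_dist_lt_disjoint_ball {X : Set E} (hX : IsClosed X) {R : ℝ} (hR : 0 < R)
    (hreach : ∀ y, infDist y X < R → ∃! x, x ∈ X ∧ dist y x = infDist y X)
    {x : E} (hx : x ∉ X) :
    ∃ y, dist x y < R ∧ Disjoint (ball y R) X := by
  set d := infDist x X
  suffices ∃ y, dist x y < R ∧ R ≤ infDist y X from
    this.imp fun y hy => ⟨hy.1, (disjoint_ball_infDist).mono_left (ball_subset_ball hy.2)⟩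
  rcases le_or_gt R d with hRd | hdR
  · exact ⟨x, by simpa using hR, hRd⟩
  obtain ⟨p₀, ⟨hp₀, -⟩, -⟩ := hreach x hdR
  have hd : 0 < d := (hX.notMem_iff_infDist_pos ⟨p₀, hp₀⟩).mp hx
  -- `λ` is chosen so that `(R - d) / λ < R`, which keeps `x` inside the final ball.
  set lam := 1 - d / (2 * R)
  have hd2R : d / (2 * R) < 1 := (div_lt_one (by positivity)).mpr (by linarith)
  have hlam0 : 0 < lam := sub_pos.mpr hd2R
  have hlam1 : lam < 1 := sub_lt_self _ (by positivity)
  have hRlam : R * lam = R - d / 2 := by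
    simp only [lam]
    field_simp
  set K := {c | lam * dist c x + d ≤ infDist c X ∧ infDist c X ≤ R}
  have hK : IsCompact K := isCompact_setOf_mul_dist_add_le_infDist_le X x hlam0 d R
  have hxK : x ∈ K := show _ ∧ _ by
    rw [dist_self, mul_zero, zero_add]
    exact ⟨le_rfl, hdR.le⟩
  obtain ⟨c, hcK, hcmax⟩ :=
    hK.exists_isMaxOn ⟨x, hxK⟩ (continuous_infDist_pt X).continuousOn
  have hcx : lam * dist c x + d ≤ R := hcK.1.trans hcK.2
  refine ⟨c, ?_, ?_⟩
  · rw [dist_comm]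
    nlinarith
  by_contra! hcR
  have hc : 0 < infDist c X := hd.trans_le (by nlinarith [hcK.1, dist_nonneg (x := c) (y := x)])
  obtain ⟨c', hc'c, hc'R, hlt⟩ := exists_lt_infDist_of_infDist_lt hX hreach hc hcR hlam0 hlam1
  have hc'K : c' ∈ K := by
    refine ⟨?_, hc'R⟩
    nlinarith [dist_triangle c' c x, hcK.1]
  exact (hcmax hc'K).not_gt hlt

end InnerProductSpace

/-- If `X ⊆ ℝ^n` is closed with `reach(X) ≥ R > 0` (every point within distance `R` of
`X` has a unique nearest point in `X`), then `X` is `R`-convex: `X` is the intersection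
of the complements of all open `R`-balls disjoint from `X`; equivalently, every point
outside `X` lies in an open `R`-ball disjoint from `X`. -/
theorem stmt15 (n : ℕ) (R : ℝ) (hR : 0 < R) (X : Set (EuclideanSpace ℝ (Fin n)))
    (hXcl : IsClosed X)
    (hreach : ∀ y : EuclideanSpace ℝ (Fin n), infDist y X < R →
      ∃! x, x ∈ X ∧ dist y x = infDist y X) :
    X = ⋂₀ {S : Set (EuclideanSpace ℝ (Fin n)) |
        ∃ y, S = (ball y R)ᶜ ∧ ball y R ∩ X = ∅} ∧
    ∀ x ∉ X, ∃ y, x ∈ ball y R ∧ ball y R ∩ X = ∅ := by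
  have hball : ∀ x ∉ X, ∃ y, x ∈ ball y R ∧ ball y R ∩ X = ∅ := fun x hx =>
    (exists_dist_lt_disjoint_ball hXcl hR hreach hx).imp fun y hy =>
      ⟨mem_ball.mpr hy.1, Set.disjoint_iff_inter_eq_empty.mp hy.2⟩
  refine ⟨Set.Subset.antisymm ?_ ?_, hball⟩
  · rintro z hz _ ⟨y, rfl, hyX⟩ hzy
    exact (Set.eq_empty_iff_forall_notMem.mp hyX) z ⟨hzy, hz⟩
  · intro z hz
    by_contra hzX
    obtain ⟨y, hzy, hyX⟩ := hball z hzX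
    exact hz _ ⟨y, rfl, hyX⟩ hzy
end

section
/- Let M ⊆ ℝ^n be a C^1 hypersurface (an (n−1)-dimensional submanifold) with reach(M) ≥ r > 0. Then for all p, q ∈ M, the distance from q − p to the tangent space T_p M satisfies d_{T_p M}(q − p) ≤ ‖q − p‖²/(2r); equivalently, |(q − p)·n(p)| ≤ ‖q − p‖²/(2r) for a unit normal n(p) at p. -/
/-!
If `y` has nearest point `x` on `M` at distance `d₀ < r`, then for every `d' < r` the open ball
of radius `d'` centred at `x + (d' / d₀) • (y - x)` misses `M`; expanding `d' ≤ dist` to the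
centre gives `2 d' ⟪y - x, q - x⟫ ≤ d₀ ‖q - x‖²` for `q ∈ M`. To push the centre along the ray,
maximise `infDist · M - θ * dist · y` over a compact set: where the nearest point is unique, the
distance function grows at rate almost `1` along the normal, so the maximiser reaches level `d'`
within distance `(d' - d₀) / θ` of `y`, and `θ → 1` forces a point of level `d'` onto the ray.

A unit vector `ν` orthogonal to the tangent cone at `p` is a limit of such normals: the nearest
points `x t` to `p + t • ν` satisfy `x t - p = o(t)`, because directions from `p` into `M`
become orthogonal to `ν`. The distance from `q - p` to the tangent space is `⟪ν, q - p⟫` for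
the unit normal `ν` pointing along the orthogonal component of `q - p`.
-/

open Metric Filter Set
open scoped RealInnerProductSpace Topology

lemma exists_pos_add_le_dist_of_unique_nearest {X : Type*} [MetricSpace X] [ProperSpace X]
    {M : Set X} (hMcl : IsClosed M) {z x : X}
    (hzx : dist z x = infDist z M) (huniq : ∀ y ∈ M, dist z y = infDist z M → y = x)
    {η : ℝ} (hη : 0 < η) :
    ∃ γ > 0, ∀ q ∈ M, η ≤ dist q x → dist z x + γ ≤ dist z q := by
  set K := M \ ball x η
  rcases K.eq_empty_or_nonempty with hK | hK
  · refine ⟨1, one_pos, fun q hqM hq => absurd hK ?_⟩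
    exact Set.nonempty_iff_ne_empty.mp ⟨q, hqM, by simpa [dist_comm] using hq⟩
  obtain ⟨q₀, ⟨hq₀M, hq₀η⟩, hq₀⟩ := (hMcl.sdiff isOpen_ball).exists_infDist_eq_dist hK z
  have hlt : dist z x < dist z q₀ := by
    refine lt_of_le_of_ne (hzx ▸ infDist_le_dist_of_mem hq₀M) fun h => hq₀η ?_
    rw [huniq q₀ hq₀M (h ▸ hzx)]
    exact mem_ball_self hη
  refine ⟨dist z q₀ - dist z x, sub_pos.mpr hlt, fun q hqM hq => ?_⟩
  have : dist z q₀ ≤ dist z q :=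
    hq₀ ▸ infDist_le_dist_of_mem ⟨hqM, by simpa [dist_comm] using hq⟩
  linarith

lemma tangentConeAt_subset_of_sub_mem {R F : Type*} [AddCommGroup F] [SMul R F]
    [TopologicalSpace F] {s C : Set F} {x : F} (hC : IsClosed C)
    (hsmul : ∀ (a : R), ∀ v ∈ C, a • v ∈ C) (hs : ∀ y ∈ s, y - x ∈ C) :
    tangentConeAt R s x ⊆ C := by
  intro w hw
  obtain ⟨_, l, _, c, d, -, hds, hcd⟩ := exists_fun_of_mem_tangentConeAt hw
  exact hC.mem_of_tendsto hcd (hds.mono fun n hn => hsmul _ _ (by simpa using hs _ hn))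

lemma tendsto_of_dist_add_smul_le {F : Type*} [NormedAddCommGroup F] [NormedSpace ℝ F]
    {p ν : F} (hν₁ : ‖ν‖ = 1) {x : ℝ → F} (hx : ∀ t > 0, dist (p + t • ν) (x t) ≤ t) :
    Tendsto x (𝓝[>] 0) (𝓝 p) := by
  have h2t : Tendsto (fun t : ℝ => 2 * t) (𝓝[>] 0) (𝓝 0) := by
    simpa using (tendsto_nhdsWithin_of_tendsto_nhds (s := Ioi 0)
      (tendsto_id (x := 𝓝 (0 : ℝ)))).const_mul 2
  refine tendsto_iff_dist_tendsto_zero.mpr (squeeze_zero' (.of_forall fun _ => dist_nonneg) ?_ h2t)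
  filter_upwards [self_mem_nhdsWithin] with t (ht : 0 < t)
  have hpt : dist (p + t • ν) p = t := by
    rw [dist_self_add_left, norm_smul, hν₁, mul_one, Real.norm_of_nonneg ht.le]
  linarith [dist_triangle (x t) (p + t • ν) p, dist_comm (x t) (p + t • ν), hx t ht]

section Reach

variable {E : Type*} [NormedAddCommGroup E] [InnerProductSpace ℝ E]

lemma Submodule.infDist_le_of_forall_inner_le (W : Submodule ℝ E) [W.HasOrthogonalProjection]
    (v : E) {B : ℝ} (hB : 0 ≤ B) (h : ∀ ν ∈ Wᗮ, ‖ν‖ = 1 → ⟪ν, v⟫ ≤ B) :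
    infDist v W ≤ B := by
  set w := v - W.starProjection v
  have hwW : w ∈ Wᗮ := W.sub_starProjection_mem_orthogonal v
  have hdist : infDist v W ≤ ‖w‖ :=
    (infDist_le_dist_of_mem (W.starProjection_apply_mem v)).trans_eq (dist_eq_norm _ _)
  rcases eq_or_ne w 0 with hw₀ | hw₀
  · rw [hw₀, norm_zero] at hdist
    exact hdist.trans hB
  have hw : 0 < ‖w‖ := norm_pos_iff.mpr hw₀
  have hwv : ⟪w, v⟫ = ‖w‖ ^ 2 := by
    conv_lhs => rw [← sub_add_cancel v (W.starProjection v)]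
    rw [inner_add_right, W.inner_left_of_mem_orthogonal (W.starProjection_apply_mem v) hwW,
      real_inner_self_eq_norm_sq, add_zero]
  have hν := h (‖w‖⁻¹ • w) (Wᗮ.smul_mem _ hwW)
    (by rw [norm_smul, norm_inv, norm_norm, inv_mul_cancel₀ hw.ne'])
  rw [real_inner_smul_left, hwv, sq, inv_mul_cancel_left₀ hw.ne'] at hν
  exact hdist.trans hν

def ReachAtLeast (M : Set E) (r : ℝ) : Prop :=
  ∀ y : E, infDist y M < r → ∃! x, x ∈ M ∧ dist y x = infDist y M

variable [ProperSpace E] {M : Set E}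

lemma exists_mem_closedBall_infDist_add_mul_dist_lt (hMcl : IsClosed M) {z x : E} (hx : x ∈ M)
    (hzx : dist z x = infDist z M) (huniq : ∀ y ∈ M, dist z y = infDist z M → y = x)
    (hd : 0 < dist z x) {θ : ℝ} (hθ₀ : 0 ≤ θ) (hθ₁ : θ < 1) {ε₀ : ℝ} (hε₀ : 0 < ε₀) :
    ∃ z' ∈ closedBall z ε₀, infDist z M + θ * dist z' z < infDist z' M := by
  set d := dist z x
  obtain ⟨γ, hγ, hgap⟩ :=
    exists_pos_add_le_dist_of_unique_nearest hMcl hzx huniq (mul_pos (sub_pos.mpr hθ₁) hd)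
  set u := d⁻¹ • (z - x)
  have hu : ‖u‖ = 1 := by
    rw [norm_smul, ← dist_eq_norm, norm_inv, Real.norm_of_nonneg hd.le, inv_mul_cancel₀ hd.ne']
  set ε := min ε₀ (γ / 2)
  have hε : 0 < ε := lt_min hε₀ (half_pos hγ)
  set z' := z + ε • u
  have hz'z : dist z' z = ε := by
    rw [dist_self_add_left, norm_smul, hu, mul_one, Real.norm_of_nonneg hε.le]
  refine ⟨z', mem_closedBall.mpr (hz'z.trans_le (min_le_left _ _)), ?_⟩
  obtain ⟨q, hqM, hq⟩ := hMcl.exists_infDist_eq_dist ⟨x, hx⟩ z'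
  rw [hq, ← hzx, hz'z]
  have hdq : d ≤ dist z q := hzx ▸ infDist_le_dist_of_mem hqM
  by_cases hfar : (1 - θ) * d ≤ dist q x
  · have := hgap q hqM hfar
    have := dist_triangle z z' q
    have : ε ≤ γ / 2 := min_le_right _ _
    nlinarith [dist_comm z z']
  · have hinner : θ * d < ⟪u, z - q⟫ := by
      have hux : ⟪u, z - x⟫ = d := by
        rw [real_inner_smul_left, real_inner_self_eq_norm_sq, ← dist_eq_norm]
        field_simp
        rfl
      have hxq : -dist q x ≤ ⟪u, x - q⟫ := by
        have := abs_real_inner_le_norm u (x - q)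
        rw [hu, one_mul, ← dist_eq_norm, dist_comm] at this
        linarith [neg_abs_le ⟪u, x - q⟫]
      rw [show z - q = (z - x) + (x - q) by abel, inner_add_right, hux]
      linarith
    have hsq : dist z' q ^ 2 = dist z q ^ 2 + 2 * ε * ⟪u, z - q⟫ + ε ^ 2 := by
      rw [dist_eq_norm, dist_eq_norm, add_sub_right_comm z (ε • u) q,
        norm_add_sq_real, real_inner_smul_right, norm_smul, hu, Real.norm_of_nonneg hε.le,
        real_inner_comm]
      ring
    have : (d + θ * ε) ^ 2 < dist z' q ^ 2 := by
      rw [hsq]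
      nlinarith [mul_lt_mul_of_pos_left hinner (by positivity : 0 < 2 * ε),
        mul_le_mul hdq hdq hd.le dist_nonneg, mul_le_mul hθ₁.le hθ₁.le hθ₀ zero_le_one]
    nlinarith [dist_nonneg (x := z') (y := q)]

/-- The maximizer of `infDist · M - θ * dist · y` cannot sit strictly below level `d'`, since
there the distance function grows at a rate larger than `θ`. -/
lemma ReachAtLeast.exists_dist_le_infDist_eq {r : ℝ} (hMcl : IsClosed M)
    (hreach : ReachAtLeast M r) {y : E} {d' R : ℝ} (hy : 0 < infDist y M)
    (hyd' : infDist y M < d') (hd'r : d' < r) (hR : d' - infDist y M < R) :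
    ∃ z, dist z y ≤ R ∧ infDist z M = d' := by
  set d₀ := infDist y M
  set θ := (d' - d₀) / R
  have hR₀ : 0 < R := by linarith
  have hθ₀ : 0 < θ := div_pos (by linarith) hR₀
  have hθ₁ : θ < 1 := (div_lt_one hR₀).mpr hR
  set K := closedBall y R ∩ {w | infDist w M ≤ d'}
  have hK : IsCompact K := (isCompact_closedBall y R).inter_right
    (isClosed_le (continuous_infDist_pt M) continuous_const)
  have hyK : y ∈ K := ⟨mem_closedBall_self hR₀.le, hyd'.le⟩
  obtain ⟨z, ⟨hzR, hzd'⟩, hzmax⟩ := hK.exists_isMaxOn ⟨y, hyK⟩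
    (f := fun w => infDist w M - θ * dist w y) (by fun_prop)
  have hfz : d₀ ≤ infDist z M - θ * dist z y := by simpa using hzmax hyK
  refine ⟨z, hzR, (lt_or_eq_of_le hzd').resolve_left fun hlt => ?_⟩
  have hθR : θ * R = d' - d₀ := div_mul_cancel₀ _ hR₀.ne'
  have hzy : dist z y < R := by nlinarith [dist_nonneg (x := z) (y := y)]
  obtain ⟨x, ⟨hxM, hzx⟩, huniq⟩ := hreach z (hlt.trans hd'r)
  obtain ⟨z', hz'z, hgrow⟩ := exists_mem_closedBall_infDist_add_mul_dist_lt hMcl hxM hzx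
    (fun q hq h => huniq q ⟨hq, h⟩) (hzx ▸ by nlinarith [dist_nonneg (x := z) (y := y)])
    hθ₀.le hθ₁ (ε₀ := min (R - dist z y) (d' - infDist z M)) (lt_min (by linarith) (by linarith))
  rw [mem_closedBall] at hz'z
  have hz'K : z' ∈ K := by
    refine ⟨mem_closedBall.mpr ?_, ?_⟩
    · linarith [dist_triangle z' z y, min_le_left (R - dist z y) (d' - infDist z M)]
    · have := infDist_le_infDist_add_dist (s := M) (x := z') (y := z)
      show infDist z' M ≤ d'
      linarith [min_le_right (R - dist z y) (d' - infDist z M)]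
  have : infDist z' M - θ * dist z' y ≤ infDist z M - θ * dist z y := hzmax hz'K
  nlinarith [dist_triangle z' z y]

lemma ReachAtLeast.two_mul_inner_le_of_lt {r : ℝ} (hMcl : IsClosed M)
    (hreach : ReachAtLeast M r) {y x : E} (hx : x ∈ M) (hyx : dist y x = infDist y M)
    (hd₀ : 0 < dist y x) {d' : ℝ} (hd' : dist y x < d') (hd'r : d' < r) {q : E} (hq : q ∈ M) :
    2 * d' * ⟪y - x, q - x⟫ ≤ dist y x * ‖q - x‖ ^ 2 := by
  set d₀ := dist y x
  have hlevel R (hR : d' - d₀ < R) : ∃ z, dist z y ≤ R ∧ infDist z M = d' :=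
    hreach.exists_dist_le_infDist_eq hMcl (hyx ▸ hd₀) (hyx ▸ hd') hd'r (hyx ▸ hR)
  set S := {w | infDist w M = d'}
  have hS : IsClosed S := isClosed_eq (continuous_infDist_pt M) continuous_const
  obtain ⟨z, hzS, hz⟩ := hS.exists_infDist_eq_dist
    (let ⟨z, _, hz⟩ := hlevel (d' - d₀ + 1) (by linarith); ⟨z, hz⟩) y
  have hzy : dist y z ≤ d' - d₀ := le_of_forall_gt_imp_ge_of_dense fun R hR => by
    obtain ⟨w, hwy, hwS⟩ := hlevel R hR
    rw [← hz]
    exact (infDist_le_dist_of_mem (x := y) hwS).trans ((dist_comm y w).trans_le hwy)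
  -- `z` lies on the ray from `x` through `y`, at distance `d'` from `x`.
  set a := z - y
  set b := y - x
  have ha : ‖a‖ ≤ d' - d₀ := by rw [← dist_eq_norm, dist_comm]; exact hzy
  have hb : ‖b‖ = d₀ := (dist_eq_norm y x).symm
  have hab : a + b = z - x := sub_add_sub_cancel z y x
  have hd'ab : d' ≤ ‖a + b‖ := by
    rw [hab, ← dist_eq_norm, ← hzS]; exact infDist_le_dist_of_mem hx
  have hnorm : ‖a + b‖ = ‖a‖ + ‖b‖ := le_antisymm (norm_add_le a b) (by linarith)
  have hd'eq : ‖a + b‖ = d' := by linarith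
  have hray : d₀ • a = (d' - d₀) • b := by
    have := (sameRay_iff_norm_add.mpr hnorm).norm_smul_eq
    rw [hb, show ‖a‖ = d' - d₀ by linarith] at this
    exact this.symm
  have hinner : d₀ * ⟪a + b, q - x⟫ = d' * ⟪b, q - x⟫ := by
    rw [← real_inner_smul_left, smul_add, hray, ← add_smul, real_inner_smul_left]
    ring_nf
  have hdq : d' ≤ ‖(a + b) - (q - x)‖ := by
    rw [hab, sub_sub_sub_cancel_right, ← dist_eq_norm, ← hzS]
    exact infDist_le_dist_of_mem hq
  have hexp := norm_sub_sq_real (a + b) (q - x)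
  rw [hd'eq] at hexp
  nlinarith [mul_le_mul hdq hdq (by linarith) (norm_nonneg _)]

lemma ReachAtLeast.two_mul_inner_le {r : ℝ} (hMcl : IsClosed M) (hreach : ReachAtLeast M r)
    {y x : E} (hx : x ∈ M) (hyx : dist y x = infDist y M) (hyr : infDist y M < r) {q : E}
    (hq : q ∈ M) :
    2 * r * ⟪y - x, q - x⟫ ≤ dist y x * ‖q - x‖ ^ 2 := by
  rcases (dist_nonneg (x := y) (y := x)).eq_or_lt with h₀ | h₀
  · rw [dist_eq_zero.mp h₀.symm, sub_self, inner_zero_left]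
    simp
  have hlim : Tendsto (fun d' => 2 * d' * ⟪y - x, q - x⟫) (𝓝[<] r) (𝓝 (2 * r * ⟪y - x, q - x⟫)) :=
    ((continuous_const.mul continuous_id).mul continuous_const).continuousAt.tendsto.mono_left
      nhdsWithin_le_nhds
  refine le_of_tendsto hlim ?_
  filter_upwards [Ioo_mem_nhdsLT (hyx ▸ hyr)] with d' hd'
  exact hreach.two_mul_inner_le_of_lt hMcl hx hyx h₀ hd'.1 hd'.2 hq

lemma eventually_abs_inner_sub_le_mul_norm {p ν : E}
    (hν : ∀ w ∈ tangentConeAt ℝ M p, ⟪w, ν⟫ = 0) {c : ℝ} (hc : 0 < c) :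
    ∀ᶠ q in 𝓝[M] p, |⟪q - p, ν⟫| ≤ c * ‖q - p‖ := by
  set S := {q ∈ M | c * ‖q - p‖ < |⟪q - p, ν⟫|}
  have hS : ¬AccPt p (𝓟 S) := fun hacc => by
    obtain ⟨w, hwS, hw₀⟩ := tangentConeAt_nonempty_of_properSpace (𝕜 := ℝ) hacc
    have hwC : c * ‖w‖ ≤ |⟪w, ν⟫| := by
      refine tangentConeAt_subset_of_sub_mem (C := {v | c * ‖v‖ ≤ |⟪v, ν⟫|})
        (isClosed_le (by fun_prop) (by fun_prop)) (fun a v hv => ?_) (fun q hq => hq.2.le) hwS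
      simp only [mem_ofPred_eq, norm_smul, real_inner_smul_left, abs_mul, Real.norm_eq_abs] at hv ⊢
      nlinarith [abs_nonneg a]
    rw [hν w (tangentConeAt_mono (sep_subset M _) hwS), abs_zero] at hwC
    exact hw₀ (norm_eq_zero.mp (le_antisymm (nonpos_of_mul_nonpos_right hwC hc) (norm_nonneg _)))
  rw [accPt_iff_frequently, not_frequently] at hS
  rw [eventually_nhdsWithin_iff]
  filter_upwards [hS] with q hq hqM
  rcases eq_or_ne q p with rfl | hqp
  · simp
  · exact not_lt.mp fun h => hq ⟨hqp, hqM, h⟩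

lemma tendsto_inv_smul_sub_nhds_zero {p ν : E} (hν₁ : ‖ν‖ = 1)
    (hν : ∀ w ∈ tangentConeAt ℝ M p, ⟪w, ν⟫ = 0) {x : ℝ → E} (hxM : ∀ t, x t ∈ M)
    (hx : ∀ t > 0, dist (p + t • ν) (x t) ≤ t) :
    Tendsto (fun t => t⁻¹ • (x t - p)) (𝓝[>] 0) (𝓝 0) := by
  have hxp : Tendsto x (𝓝[>] 0) (𝓝[M] p) :=
    tendsto_nhdsWithin_iff.mpr ⟨tendsto_of_dist_add_smul_le hν₁ hx, .of_forall hxM⟩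
  refine Metric.tendsto_nhds.mpr fun ε hε => ?_
  filter_upwards [hxp.eventually (eventually_abs_inner_sub_le_mul_norm hν (c := ε / 4)
    (by positivity)), self_mem_nhdsWithin] with t hangle (ht : 0 < t)
  set ρ := ‖x t - p‖
  have hρ : ρ ^ 2 ≤ 2 * t * ⟪x t - p, ν⟫ := by
    have h := hx t ht
    rw [dist_eq_norm, show p + t • ν - x t = t • ν - (x t - p) by abel] at h
    have h2 := norm_sub_sq_real (t • ν) (x t - p)
    rw [norm_smul, hν₁, Real.norm_of_nonneg ht.le, real_inner_smul_left, real_inner_comm] at h2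
    nlinarith [norm_nonneg (t • ν - (x t - p))]
  have hρρ : ρ * ρ ≤ ε / 2 * t * ρ := by
    nlinarith [mul_le_mul_of_nonneg_left ((le_abs_self _).trans hangle) (by positivity : 0 ≤ 2 * t)]
  have hρt : ρ ≤ ε / 2 * t := by
    by_contra! h
    nlinarith [mul_lt_mul_of_pos_right h (lt_trans (by positivity) h)]
  rw [dist_zero_right, norm_smul, norm_inv, Real.norm_of_nonneg ht.le, inv_mul_lt_iff₀ ht]
  exact hρt.trans_lt (by nlinarith [mul_pos ht hε])

theorem ReachAtLeast.two_mul_inner_le_of_orthogonal_tangentConeAt {r : ℝ} (hMcl : IsClosed M)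
    (hr : 0 < r) (hreach : ReachAtLeast M r) {p ν q : E} (hp : p ∈ M) (hν₁ : ‖ν‖ = 1)
    (hν : ∀ w ∈ tangentConeAt ℝ M p, ⟪w, ν⟫ = 0) (hq : q ∈ M) :
    2 * r * ⟪ν, q - p⟫ ≤ ‖q - p‖ ^ 2 := by
  choose x hxM hx using fun t : ℝ => hMcl.exists_infDist_eq_dist ⟨p, hp⟩ (p + t • ν)
  have hpt : ∀ t > 0, dist (p + t • ν) p = t := fun t ht => by
    rw [dist_self_add_left, norm_smul, hν₁, mul_one, Real.norm_of_nonneg ht.le]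
  have hxt : ∀ t > 0, dist (p + t • ν) (x t) ≤ t := fun t ht =>
    hx t ▸ (infDist_le_dist_of_mem hp).trans_eq (hpt t ht)
  have hxp := tendsto_of_dist_add_smul_le hν₁ hxt
  refine le_of_tendsto_of_tendsto (f := fun t => 2 * r * ⟪ν - t⁻¹ • (x t - p), q - x t⟫)
    (g := fun t => ‖q - x t‖ ^ 2) ?_ ((tendsto_const_nhds.sub hxp).norm.pow 2) ?_
  · simpa using (((tendsto_const_nhds.sub (tendsto_inv_smul_sub_nhds_zero hν₁ hν hxM hxt)).inner
      (tendsto_const_nhds.sub hxp)).const_mul (2 * r))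
  filter_upwards [Ioo_mem_nhdsGT hr] with t ⟨ht, htr⟩
  have hineq := hreach.two_mul_inner_le hMcl (hxM t) (hx t).symm
    ((infDist_le_dist_of_mem hp).trans_lt (by rwa [hpt t ht])) hq
  rw [show p + t • ν - x t = t • (ν - t⁻¹ • (x t - p)) by
    rw [smul_sub, smul_smul, mul_inv_cancel₀ ht.ne', one_smul]; abel, real_inner_smul_left] at hineq
  exact le_of_mul_le_mul_left
    (by nlinarith [mul_le_mul_of_nonneg_right (hxt t ht) (sq_nonneg ‖q - x t‖)]) ht

end Reach

theorem stmt18_general (n : ℕ) (r : ℝ) (hr : 0 < r) (M : Set (EuclideanSpace ℝ (Fin n)))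
    (hMcl : IsClosed M)
    (hsub : ∀ p ∈ M, ∃ W : Submodule ℝ (EuclideanSpace ℝ (Fin n)),
      Module.finrank ℝ W = n - 1 ∧
      tangentConeAt ℝ M p = (W : Set (EuclideanSpace ℝ (Fin n))))
    (hreach : ∀ y : EuclideanSpace ℝ (Fin n), infDist y M < r →
      ∃! x, x ∈ M ∧ dist y x = infDist y M) :
    ∀ p ∈ M, ∀ q ∈ M,
      infDist (q - p) (tangentConeAt ℝ M p) ≤ ‖q - p‖ ^ 2 / (2 * r) := by
  intro p hp q hq
  obtain ⟨W, -, hW⟩ := hsub p hp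
  rw [hW]
  refine W.infDist_le_of_forall_inner_le (q - p) (by positivity) fun ν hνW hν₁ => ?_
  rw [le_div_iff₀ (by positivity), mul_comm]
  exact ReachAtLeast.two_mul_inner_le_of_orthogonal_tangentConeAt hMcl hr hreach hp hν₁
    (fun w hw => W.inner_right_of_mem_orthogonal (hW.le hw) hνW) hq

/-- Federer's reach characterization for `C¹` hypersurfaces: if `M ⊆ ℝ^n` is a `C¹`
hypersurface (tangent cone at every point is an `(n−1)`-dimensional subspace) with
reach at least `r > 0` (every point within distance `r` of `M` has a unique nearest
point on `M`), then for all `p, q ∈ M` the distance from `q − p` to the tangent space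
`T_p M` is at most `‖q − p‖² / (2r)`. -/
theorem stmt18 (n : ℕ) (r : ℝ) (hr : 0 < r) (M : Set (EuclideanSpace ℝ (Fin n)))
    (hMcl : IsClosed M) (hMne : M.Nonempty)
    (hsub : ∀ p ∈ M, ∃ W : Submodule ℝ (EuclideanSpace ℝ (Fin n)),
      Module.finrank ℝ W = n - 1 ∧
      tangentConeAt ℝ M p = (W : Set (EuclideanSpace ℝ (Fin n))))
    (hreach : ∀ y : EuclideanSpace ℝ (Fin n), infDist y M < r →
      ∃! x, x ∈ M ∧ dist y x = infDist y M) :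
    ∀ p ∈ M, ∀ q ∈ M,
      infDist (q - p) (tangentConeAt ℝ M p) ≤ ‖q - p‖ ^ 2 / (2 * r) :=
  stmt18_general n r hr M hMcl hsub hreach
end
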